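/- (Curtis–Hedlund–Lyndon, hard direction) Every continuous map F : Q^{Z^d} → Q^{Z^d} that commutes with all translations is defined by a local rule: there exist r ∈ N and f : Q^{B(r)} → Q such that F(c)_z = f(c restricted to z + B(r)) for all configurations c and all z. -/
import Mathlib


/-- The max norm `‖z‖_∞` of `z ∈ ℤ^d`. -/
def normInf {d : ℕ} (z : Fin d → ℤ) : ℕ :=
  Finset.univ.sup fun i => (z i).natAbs

/-- The ball `B(r) = {z ∈ ℤ^d : ‖z‖_∞ ≤ r}`. -/
def ball (d r : ℕ) : Set (Fin d → ℤ) := {z | normInf z ≤ r}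

/-- The translation (shift) by `v` on configurations: `(σ_v c)_z = c_{z+v}`. -/
def shift {Q : Type} {d : ℕ} (v : Fin d → ℤ) (c : (Fin d → ℤ) → Q) :
    (Fin d → ℤ) → Q :=
  fun z => c (z + v)

/-- (Curtis–Hedlund–Lyndon, hard direction) Every continuous translation-commuting
map on `Q^{ℤ^d}` is given by a local rule of some radius `r`. -/
theorem continuous_equivariant_has_local_rule (Q : Type) [Finite Q]
    [TopologicalSpace Q] [DiscreteTopology Q] (d : ℕ) (hd : 0 < d)
    (F : ((Fin d → ℤ) → Q) → ((Fin d → ℤ) → Q))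
    (hcont : Continuous F)
    (hcomm : ∀ v : Fin d → ℤ, F ∘ shift v = shift v ∘ F) :
    ∃ (r : ℕ) (f : (ball d r → Q) → Q),
      ∀ (c : (Fin d → ℤ) → Q) (z : Fin d → ℤ),
        F c z = f (fun w => c (z + w.1)) := by
  classical
  have hz0 : (0 : Fin d → ℤ) ∈ ball d 0 := by
    simp [ball, normInf]
  by_cases hQ : Nonempty Q
  · obtain ⟨q0⟩ := hQ
    haveI : CompactSpace Q := Finite.compactSpace
    set g : ((Fin d → ℤ) → Q) → Q := fun c => F c 0 with hg
    have hgcont : Continuous g := (continuous_apply (0 : Fin d → ℤ)).comp hcont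
    have hloc : ∀ c : (Fin d → ℤ) → Q, ∃ I : Finset (Fin d → ℤ),
        ∀ c', (∀ i ∈ I, c' i = c i) → g c' = g c := by
      intro c
      have hopen : IsOpen (g ⁻¹' {g c}) := (isOpen_discrete _).preimage hgcont
      rw [isOpen_pi_iff] at hopen
      obtain ⟨I, u, hu, hsub⟩ := hopen c rfl
      refine ⟨I, fun c' hc' => ?_⟩
      have hmem : c' ∈ (I : Set (Fin d → ℤ)).pi u := by
        intro i hi
        rw [hc' i hi]
        exact (hu i hi).2
      exact hsub hmem
    choose I hI using hloc
    have hVopen : ∀ c, IsOpen {c' : (Fin d → ℤ) → Q | ∀ i ∈ I c, c' i = c i} := by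
      intro c
      have he : {c' : (Fin d → ℤ) → Q | ∀ i ∈ I c, c' i = c i}
          = (I c : Set (Fin d → ℤ)).pi (fun i => {c i}) := by
        ext c'; simp [Set.mem_pi]
      rw [he]
      exact isOpen_set_pi (I c).finite_toSet (fun i _ => isOpen_discrete _)
    have hcover : (Set.univ : Set ((Fin d → ℤ) → Q)) ⊆
        ⋃ c, {c' | ∀ i ∈ I c, c' i = c i} :=
      fun c _ => Set.mem_iUnion.2 ⟨c, fun i _ => rfl⟩
    obtain ⟨t, ht⟩ := IsCompact.elim_finite_subcover isCompact_univ _ hVopen hcover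
    set S : Finset (Fin d → ℤ) := t.biUnion I with hS
    have hdep : ∀ c c' : (Fin d → ℤ) → Q, (∀ i ∈ S, c' i = c i) → g c' = g c := by
      intro c c' h
      have hc := ht (Set.mem_univ c)
      simp only [Set.mem_iUnion, Set.mem_setOf_eq] at hc
      obtain ⟨c₀, hc₀t, hc₀⟩ := hc
      have h1 : g c = g c₀ := hI c₀ c hc₀
      have h2 : g c' = g c₀ := by
        refine hI c₀ c' (fun i hi => ?_)
        rw [h i (Finset.mem_biUnion.2 ⟨c₀, hc₀t, hi⟩)]
        exact hc₀ i hi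
      rw [h1, h2]
    set r := S.sup normInf with hr
    have hSball : ∀ i ∈ S, i ∈ ball d r := fun i hi => Finset.le_sup (f := normInf) hi
    refine ⟨r, fun v => g (fun w => if h : w ∈ ball d r then v ⟨w, h⟩ else q0), ?_⟩
    intro c z
    have hFz : F c z = g (shift z c) := by
      have hcz := congrFun (congrFun (hcomm z) c) 0
      simp only [Function.comp_apply] at hcz
      rw [hg]
      simp only
      rw [hcz]
      simp [shift]
    rw [hFz]
    refine hdep _ _ (fun i hi => ?_)
    have hib : i ∈ ball d r := hSball i hi
    simp only [dif_pos hib, shift]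
    rw [add_comm]
  · refine ⟨0, fun v => v ⟨0, hz0⟩, ?_⟩
    intro c z
    exact absurd ⟨c 0⟩ hQ
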